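/- Let V be a finite dimensional vector space over a field F, and let B and B' be two bases of V. Then the nonzero component graph of V with respect to B is isomorphic to the nonzero component graph of V with respect to B', and the nonzero component union graph of V with respect to B is isomorphic to the nonzero component union graph of V with respect to B'. -/

import Mathlib

/-- The skeleton (support) of a vector with respect to a basis indexed by `ι`. -/
def skel {F V ι : Type*} [Field F] [AddCommGroup V] [Module F V]
    (B : Module.Basis ι F V) (a : V) : Set ι := {i | B.repr a i ≠ 0}

/-- The nonzero component graph IG(V) with respect to a basis. -/
def compGraph {F V ι : Type*} [Field F] [AddCommGroup V] [Module F V]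
    (B : Module.Basis ι F V) : SimpleGraph {a : V // a ≠ 0} where
  Adj a b := a ≠ b ∧ (skel B a.1 ∩ skel B b.1).Nonempty
  symm := ⟨by
    rintro a b ⟨hne, h⟩
    exact ⟨hne.symm, by rwa [Set.inter_comm]⟩⟩
  loopless := ⟨fun a h => h.1 rfl⟩

/-- The nonzero component union graph UG(V) with respect to a basis. -/
def compUnionGraph {F V ι : Type*} [Field F] [AddCommGroup V] [Module F V]
    (B : Module.Basis ι F V) : SimpleGraph {a : V // a ≠ 0} where
  Adj a b := a ≠ b ∧ skel B a.1 ∪ skel B b.1 = Set.univ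
  symm := ⟨by
    rintro a b ⟨hne, h⟩
    exact ⟨hne.symm, by rwa [Set.union_comm]⟩⟩
  loopless := ⟨fun a h => h.1 rfl⟩

lemma repr_equiv {F V ι ι' : Type*} [Field F] [AddCommGroup V] [Module F V]
    (B : Module.Basis ι F V) (B' : Module.Basis ι' F V) (e : ι ≃ ι') (a : V) (j : ι') :
    B'.repr (B.equiv B' e a) j = B.repr a (e.symm j) := by
  have h : Finsupp.mapDomain e.symm (B'.repr (B.equiv B' e a)) = B.repr a := by
    rw [← Module.Basis.repr_reindex]
    show (B'.reindex e.symm).repr ((B.repr.trans (B'.reindex e.symm).repr.symm) a)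
        = B.repr a
    simp only [LinearEquiv.trans_apply, LinearEquiv.apply_symm_apply]
  calc B'.repr (B.equiv B' e a) j
      = Finsupp.mapDomain e.symm (B'.repr (B.equiv B' e a)) (e.symm j) :=
        (Finsupp.mapDomain_apply e.symm.injective _ _).symm
    _ = B.repr a (e.symm j) := by rw [h]

lemma skel_equiv {F V ι ι' : Type*} [Field F] [AddCommGroup V] [Module F V]
    (B : Module.Basis ι F V) (B' : Module.Basis ι' F V) (e : ι ≃ ι') (a : V) :
    skel B' (B.equiv B' e a) = e '' skel B a := by
  ext j
  simp only [skel, Set.mem_setOf_eq, repr_equiv]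
  constructor
  · intro h; exact ⟨e.symm j, h, by simp⟩
  · rintro ⟨i, hi, rfl⟩; simpa using hi

/-- Let `V` be a finite dimensional vector space over a field `F`,
and let `B`, `B'` be two bases of `V`. Then the nonzero component graphs of `V`
with respect to `B` and to `B'` are isomorphic, and likewise the nonzero component
union graphs with respect to `B` and to `B'` are isomorphic. -/
theorem stmt15 {F V ι ι' : Type*} [Field F] [AddCommGroup V] [Module F V]
    [Finite ι] [Finite ι'] (B : Module.Basis ι F V) (B' : Module.Basis ι' F V) :
    Nonempty (compGraph B ≃g compGraph B') ∧
    Nonempty (compUnionGraph B ≃g compUnionGraph B') := by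
  have e : ι ≃ ι' := B.indexEquiv B'
  set f := B.equiv B' e with hf
  have hv : ∀ a : V, a ≠ 0 → f a ≠ 0 := fun a ha h => ha (by
    have := f.injective (h.trans (map_zero f).symm); simpa using this)
  have hv' : ∀ a : V, a ≠ 0 → f.symm a ≠ 0 := fun a ha h => ha (by
    have := f.symm.injective (h.trans (map_zero f.symm).symm); simpa using this)
  set φ : {a : V // a ≠ 0} ≃ {a : V // a ≠ 0} :=
    { toFun := fun a => ⟨f a.1, hv a.1 a.2⟩
      invFun := fun a => ⟨f.symm a.1, hv' a.1 a.2⟩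
      left_inv := fun a => by simp
      right_inv := fun a => by simp } with hφ
  have hne : ∀ a b : {a : V // a ≠ 0}, (φ a ≠ φ b ↔ a ≠ b) :=
    fun a b => (EmbeddingLike.apply_eq_iff_eq φ).not
  constructor
  · refine ⟨⟨φ, ?_⟩⟩
    intro a b
    show (φ a ≠ φ b ∧ _) ↔ (a ≠ b ∧ _)
    rw [hne]
    refine and_congr_right fun _ => ?_
    show (skel B' (f a.1) ∩ skel B' (f b.1)).Nonempty ↔ _
    rw [skel_equiv, skel_equiv, ← Set.image_inter e.injective, Set.image_nonempty]
  · refine ⟨⟨φ, ?_⟩⟩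
    intro a b
    show (φ a ≠ φ b ∧ _) ↔ (a ≠ b ∧ _)
    rw [hne]
    refine and_congr_right fun _ => ?_
    show skel B' (f a.1) ∪ skel B' (f b.1) = Set.univ ↔ _
    rw [skel_equiv, skel_equiv, ← Set.image_union, ← Set.image_univ_of_surjective e.surjective,
      (Set.image_injective.mpr e.injective).eq_iff]
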